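/- (Relation between the normalizing constants in consecutive dimensions) Let n ≥ 2 and 0 < s < 1, and let C_{m,s} = (∫_{ℝ^m}(1−cos(2πζ_1))/|ζ|^{m+2s} dζ)^{−1} for m ∈ {n−1, n}. Then ∫_{ℝ^n} (1−cos(2πζ_1))/|ζ|^{n+2s} dζ = (∫_ℝ (1+t²)^{−(n+2s)/2} dt) · ∫_{ℝ^{n−1}} (1−cos(2πζ_1))/|ζ'|^{(n−1)+2s} dζ'; equivalently, C_{n−1,s} = C_{n,s} · ∫_ℝ (1+t²)^{−(n+2s)/2} dt. -/

import Mathlib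

/-!
Write `ζ ∈ ℝ^{m+1}` as `(y, t)` with `t` its last coordinate, so that `|ζ|² = |y|² + t²` and the
numerator `1 - cos (2π ζ₁)` depends on `y` only. By Tonelli, integrate in `t` first: the
substitution `t = |y| u` gives `∫ (|y|² + t²)^{-p/2} dt = |y|^{1-p} ∫ (1 + u²)^{-p/2} du`, which
lowers the exponent `p = m + 1 + 2s` by one. The factor `∫ (1 + u²)^{-p/2} du` is finite and
positive since `p > 1`, so the relation between the constants follows by inverting.
-/

open MeasureTheory Filter Metric Set

noncomputable section

/-- Euclidean space `ℝ^n`. -/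
abbrev En (n : ℕ) := EuclideanSpace ℝ (Fin n)

/-- The normalizing constant `C_{n,s}` of the fractional Laplacian. -/
noncomputable def fracConst (n : ℕ) [NeZero n] (s : ℝ) : ℝ :=
  (∫ ζ : En n, (1 - Real.cos (2 * Real.pi * ζ 0)) / ‖ζ‖ ^ ((n : ℝ) + 2 * s))⁻¹

/-- `(-Δ)^s u (x) = L` in the principal value (limit) sense. -/
def HasFracLap (n : ℕ) [NeZero n] (s : ℝ) (u : En n → ℝ) (x : En n) (L : ℝ) : Prop :=
  Tendsto
    (fun ε : ℝ =>
      fracConst n s *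
        ∫ y in {y : En n | ε ≤ dist x y}, (u x - u y) / dist x y ^ ((n : ℝ) + 2 * s))
    (nhdsWithin 0 (Set.Ioi (0 : ℝ))) (nhds L)

/-- Membership in the space `L_{2s}`. -/
def MemL2s (n : ℕ) (s : ℝ) (u : En n → ℝ) : Prop :=
  LocallyIntegrable u volume ∧
    Integrable (fun y : En n => |u y| / (1 + ‖y‖ ^ ((n : ℝ) + 2 * s))) volume

/-- `u ∈ C^{1,1}_loc(Ω)`: near every point of `Ω`, `u` is differentiable with
locally Lipschitz derivative. -/
def C11On (n : ℕ) (u : En n → ℝ) (Ω : Set (En n)) : Prop :=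
  ∀ x ∈ Ω, ∃ ε > 0, ball x ε ⊆ Ω ∧ DifferentiableOn ℝ u (ball x ε) ∧
    ∃ C : NNReal, LipschitzOnWith C (fderiv ℝ u) (ball x ε)

/-- Reflection `x ↦ x^λ = (2λ - x₁, x')` across the hyperplane `{x₁ = λ}`. -/
def reflHyp (n : ℕ) [NeZero n] (lam : ℝ) (x : En n) : En n :=
  WithLp.toLp 2 (Function.update x 0 (2 * lam - x 0))

/-- The half space `Σ_λ = {x : x₁ < λ}`. -/
def SigmaL (n : ℕ) [NeZero n] (lam : ℝ) : Set (En n) := {x : En n | x 0 < lam}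

/-- The half space `ℝ^n_+ = {x : x₁ > 0}`. -/
def HalfSpace (n : ℕ) [NeZero n] : Set (En n) := {x : En n | 0 < x 0}

open scoped ENNReal

theorem lintegral_comp_mul_left_real (f : ℝ → ℝ≥0∞) {a : ℝ} (ha : a ≠ 0) :
    ∫⁻ x, f (a * x) = ENNReal.ofReal |a⁻¹| * ∫⁻ x, f x := by
  have h := lintegral_map_equiv f (MeasurableEquiv.mulLeft₀ a ha) (μ := volume)
  rw [MeasurableEquiv.coe_mulLeft₀, Real.map_volume_mul_left ha, lintegral_smul_measure] at h
  exact h.symm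

def euclideanSnoc {m : ℕ} (y : En m) (t : ℝ) : En (m + 1) :=
  WithLp.toLp 2 (Fin.snoc (α := fun _ => ℝ) y.ofLp t)

@[simp]
theorem euclideanSnoc_apply_castSucc {m : ℕ} (y : En m) (t : ℝ) (i : Fin m) :
    euclideanSnoc y t i.castSucc = y i := by
  simp [euclideanSnoc]

theorem norm_euclideanSnoc_sq {m : ℕ} (y : En m) (t : ℝ) :
    ‖euclideanSnoc y t‖ ^ 2 = ‖y‖ ^ 2 + t ^ 2 := by
  simp [EuclideanSpace.norm_sq_eq, Fin.sum_univ_castSucc, euclideanSnoc]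

theorem measurePreserving_euclideanSnoc (m : ℕ) :
    MeasurePreserving (fun z : En m × ℝ => euclideanSnoc z.1 z.2) := by
  have e := (PiLp.volume_preserving_toLp (Fin (m + 1))).comp <|
    ((volume_preserving_piFinSuccAbove (fun _ : Fin (m + 1) => ℝ) (Fin.last m)).symm).comp <|
    Measure.measurePreserving_swap.comp <|
    (PiLp.volume_preserving_ofLp (Fin m)).prod (MeasurePreserving.id volume)
  rw [Measure.volume_eq_prod]
  convert e using 1
  ext z i
  simp [euclideanSnoc]

theorem lintegral_euclidean_succ {m : ℕ} {F : En (m + 1) → ℝ≥0∞} (hF : Measurable F) :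
    ∫⁻ ζ, F ζ = ∫⁻ y : En m, ∫⁻ t : ℝ, F (euclideanSnoc y t) := by
  rw [← (measurePreserving_euclideanSnoc m).lintegral_comp hF, Measure.volume_eq_prod]
  exact lintegral_prod _ (hF.comp (measurePreserving_euclideanSnoc m).measurable).aemeasurable

theorem lintegral_rpow_sq_add_sq (p : ℝ) {r : ℝ} (hr : 0 < r) :
    ∫⁻ t : ℝ, ENNReal.ofReal ((r ^ 2 + t ^ 2) ^ (-p / 2)) =
      ENNReal.ofReal (r ^ (1 - p)) * ∫⁻ u : ℝ, ENNReal.ofReal ((1 + u ^ 2) ^ (-p / 2)) := by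
  have hscale : ∀ u : ℝ, (r ^ 2 + (r * u) ^ 2) ^ (-p / 2) = r ^ (-p) * (1 + u ^ 2) ^ (-p / 2) := by
    intro u
    rw [show r ^ 2 + (r * u) ^ 2 = r ^ 2 * (1 + u ^ 2) by ring,
      Real.mul_rpow (sq_nonneg r) (by positivity), ← Real.rpow_two, ← Real.rpow_mul hr.le]
    ring_nf
  have key := lintegral_comp_mul_left_real (fun t => ENNReal.ofReal ((r ^ 2 + t ^ 2) ^ (-p / 2)))
    hr.ne'
  simp only [hscale, ENNReal.ofReal_mul (Real.rpow_nonneg hr.le _)] at key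
  rw [lintegral_const_mul' _ _ ENNReal.ofReal_ne_top, abs_inv, abs_of_pos hr] at key
  rw [show 1 - p = 1 + -p by ring, Real.rpow_add hr, Real.rpow_one, ENNReal.ofReal_mul hr.le,
    mul_assoc, key, ← mul_assoc, ← ENNReal.ofReal_mul hr.le, mul_inv_cancel₀ hr.ne',
    ENNReal.ofReal_one, one_mul]

theorem lintegral_div_norm_euclideanSnoc_rpow {m : ℕ} (p : ℝ) {c : ℝ} (hc : 0 ≤ c) {y : En m}
    (hy : y ≠ 0) :
    ∫⁻ t : ℝ, ENNReal.ofReal (c / ‖euclideanSnoc y t‖ ^ p) =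
      ENNReal.ofReal (c / ‖y‖ ^ (p - 1)) * ∫⁻ u : ℝ, ENNReal.ofReal ((1 + u ^ 2) ^ (-p / 2)) := by
  have hr : 0 < ‖y‖ := norm_pos_iff.2 hy
  have h : ∀ t, c / ‖euclideanSnoc y t‖ ^ p = c * (‖y‖ ^ 2 + t ^ 2) ^ (-p / 2) := by
    intro t
    rw [← norm_euclideanSnoc_sq, ← Real.rpow_two, ← Real.rpow_mul (norm_nonneg _),
      show 2 * (-p / 2) = -p by ring, Real.rpow_neg (norm_nonneg _), div_eq_mul_inv]
  simp_rw [h, ENNReal.ofReal_mul hc]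
  rw [lintegral_const_mul' _ _ ENNReal.ofReal_ne_top, lintegral_rpow_sq_add_sq p hr, ← mul_assoc,
    ← ENNReal.ofReal_mul hc, show 1 - p = -(p - 1) by ring, Real.rpow_neg hr.le, ← div_eq_mul_inv]

theorem lintegral_div_norm_rpow_succ (m : ℕ) [NeZero m] {g : ℝ → ℝ} (hg : Measurable g)
    (hg0 : ∀ x, 0 ≤ g x) (q : ℝ) :
    ∫⁻ ζ : En (m + 1), ENNReal.ofReal (g (ζ 0) / ‖ζ‖ ^ (q + 1)) =
      (∫⁻ u : ℝ, ENNReal.ofReal ((1 + u ^ 2) ^ (-(q + 1) / 2))) *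
        ∫⁻ ζ : En m, ENNReal.ofReal (g (ζ 0) / ‖ζ‖ ^ q) := by
  rw [lintegral_euclidean_succ (by fun_prop), mul_comm, ← lintegral_mul_const _ (by fun_prop)]
  refine lintegral_congr_ae ?_
  filter_upwards [Measure.ae_ne volume 0] with y hy
  have h0 : ∀ t, euclideanSnoc y t 0 = y 0 := fun t => by
    simpa using euclideanSnoc_apply_castSucc y t 0
  simp_rw [h0]
  rw [lintegral_div_norm_euclideanSnoc_rpow _ (hg0 _) hy, add_sub_cancel_right]

/-- No integrability is assumed: all three integrals are `toReal` of the corresponding lower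
integrals, and `ENNReal.toReal_mul` also holds when a factor is `∞`. -/
theorem integral_div_norm_rpow_succ (m : ℕ) [NeZero m] {g : ℝ → ℝ} (hg : Measurable g)
    (hg0 : ∀ x, 0 ≤ g x) (q : ℝ) :
    ∫ ζ : En (m + 1), g (ζ 0) / ‖ζ‖ ^ (q + 1) =
      (∫ u : ℝ, (1 + u ^ 2) ^ (-(q + 1) / 2)) * ∫ ζ : En m, g (ζ 0) / ‖ζ‖ ^ q := by
  rw [integral_eq_lintegral_of_nonneg_ae (ae_of_all _ fun _ => div_nonneg (hg0 _) (by positivity))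
      (by fun_prop : Measurable _).aestronglyMeasurable,
    integral_eq_lintegral_of_nonneg_ae (ae_of_all _ fun _ => div_nonneg (hg0 _) (by positivity))
      (by fun_prop : Measurable _).aestronglyMeasurable,
    integral_eq_lintegral_of_nonneg_ae (ae_of_all _ fun _ => by positivity)
      (by fun_prop : Measurable _).aestronglyMeasurable,
    lintegral_div_norm_rpow_succ m hg hg0 q, ENNReal.toReal_mul]

theorem integral_one_add_sq_rpow_neg_pos {p : ℝ} (hp : 1 < p) :
    0 < ∫ t : ℝ, (1 + t ^ 2) ^ (-p / 2) := by
  have hint : Integrable fun t : ℝ => (1 + t ^ 2) ^ (-p / 2) := by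
    simpa [Real.norm_eq_abs, sq_abs] using
      integrable_rpow_neg_one_add_norm_sq (E := ℝ) (μ := volume) (by simpa using hp)
  exact integral_pos_of_integrable_nonneg_nonzero (x := 0)
    (.rpow_const (by fun_prop) fun _ => .inl (by positivity)) hint
    (fun t => by positivity) (by norm_num)

theorem constant_relation_general
    (n : ℕ) [NeZero n] [NeZero (n - 1)] (s : ℝ)
    (hs0 : 0 < s) :
    (∫ ζ : En n, (1 - Real.cos (2 * Real.pi * ζ 0)) / ‖ζ‖ ^ ((n : ℝ) + 2 * s)) =
        (∫ t : ℝ, (1 + t ^ 2) ^ (-((n : ℝ) + 2 * s) / 2)) *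
          ∫ ζ : En (n - 1),
            (1 - Real.cos (2 * Real.pi * ζ 0)) / ‖ζ‖ ^ (((n - 1 : ℕ) : ℝ) + 2 * s) ∧
      fracConst (n - 1) s =
        fracConst n s * ∫ t : ℝ, (1 + t ^ 2) ^ (-((n : ℝ) + 2 * s) / 2) := by
  obtain ⟨m, rfl⟩ : ∃ m, n = m + 1 := ⟨n - 1, (Nat.sub_one_add_one (NeZero.ne n)).symm⟩
  -- `m + 1 - 1` reduces to `m`, which also closes the final goal by `rfl`.
  have : NeZero m := ‹NeZero (m + 1 - 1)›
  have hexp : ((m + 1 : ℕ) : ℝ) + 2 * s = (((m + 1 - 1 : ℕ) : ℝ) + 2 * s) + 1 := by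
    push_cast; ring
  have hI := integral_div_norm_rpow_succ m (g := fun x => 1 - Real.cos (2 * Real.pi * x))
    (by fun_prop) (fun x => sub_nonneg.2 (Real.cos_le_one _)) (((m + 1 - 1 : ℕ) : ℝ) + 2 * s)
  rw [← hexp] at hI
  have hK := integral_one_add_sq_rpow_neg_pos (p := ((m + 1 : ℕ) : ℝ) + 2 * s)
    (by push_cast; linarith [m.cast_nonneg (α := ℝ)])
  refine ⟨hI, ?_⟩
  rw [fracConst, fracConst, hI, mul_inv_rev, inv_mul_cancel_right₀ hK.ne']
  rfl

/-- **Relation between the normalizing constants in consecutive dimensions.** -/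
theorem constant_relation
    (n : ℕ) [NeZero n] [NeZero (n - 1)] (hn : 2 ≤ n) (s : ℝ)
    (hs0 : 0 < s) (hs1 : s < 1) :
    (∫ ζ : En n, (1 - Real.cos (2 * Real.pi * ζ 0)) / ‖ζ‖ ^ ((n : ℝ) + 2 * s)) =
        (∫ t : ℝ, (1 + t ^ 2) ^ (-((n : ℝ) + 2 * s) / 2)) *
          ∫ ζ : En (n - 1),
            (1 - Real.cos (2 * Real.pi * ζ 0)) / ‖ζ‖ ^ (((n - 1 : ℕ) : ℝ) + 2 * s) ∧
      fracConst (n - 1) s =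
        fracConst n s * ∫ t : ℝ, (1 + t ^ 2) ^ (-((n : ℝ) + 2 * s) / 2) :=
  constant_relation_general n s hs0
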